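/- Let E be a CPTP projection on the d×d complex matrices (CPTP and E∘E = E) admitting a positive-definite fixed density matrix ρ (E(ρ) = ρ, ρ positive definite of trace 1). Then E is self-adjoint with respect to the ρ^{−1}-weighted inner products: for all d×d matrices X and Y, Tr(E(X) ρ^{−1} Y) = Tr(X ρ^{−1} E(Y)) and Tr(E(X) ρ^{−1/2} Y ρ^{−1/2}) = Tr(X ρ^{−1/2} E(Y) ρ^{−1/2}). Consequently E is the orthogonal projection onto fix(E) with respect to each of these inner products. -/

import Mathlib

open Matrix
open scoped ComplexOrder

/-- A map on `d × d` complex matrices is CPTP if it admits a Kraus (operator-sum)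
representation `E(X) = ∑ k, M k * X * (M k)ᴴ` with `∑ k, (M k)ᴴ * M k = 1`. -/
def IsCPTP {d : ℕ} (E : Matrix (Fin d) (Fin d) ℂ → Matrix (Fin d) (Fin d) ℂ) : Prop :=
  ∃ (m : ℕ) (M : Fin m → Matrix (Fin d) (Fin d) ℂ),
    (∀ X, E X = ∑ k, M k * X * (M k)ᴴ) ∧ (∑ k, (M k)ᴴ * M k = 1)

/-- The old Mathlib `Matrix.PosSemidef.sqrt` (removed since), with its old definition. -/
noncomputable def posSemidefSqrtOld {d : ℕ} {A : Matrix (Fin d) (Fin d) ℂ} (hA : A.PosSemidef) :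
    Matrix (Fin d) (Fin d) ℂ :=
  (hA.1.eigenvectorUnitary : Matrix (Fin d) (Fin d) ℂ) *
    diagonal (fun i => ((Real.sqrt (hA.1.eigenvalues i) : ℝ) : ℂ)) *
    (star hA.1.eigenvectorUnitary : Matrix (Fin d) (Fin d) ℂ)

/-!
Write `E = ∑ₖ Mₖ (·) Mₖᴴ` and let `F = ∑ₖ Mₖᴴ (·) Mₖ` be its trace dual, an idempotent unital map.
Because `ρ` is a faithful invariant state, every fixed point `A` of `F` commutes with all `Mₖ`:
with `Cₖ = Mₖ A - A Mₖ`, the nonnegative sum `∑ₖ Tr(Cₖ ρ Cₖᴴ)` equals `Tr(ρ (F(AᴴA) - AᴴA)) = 0`.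
Splitting `Z = F Z + (Z - F Z)` then gives `E(ρ Z) = ρ F(Z)` and `E(Z ρ) = F(Z) ρ`, which is the
`ρ⁻¹`-self-adjointness. These relations make `F` preserve each eigenspace `{Z | ρ Z = μ Z ρ}`,
on which `ρ^{1/2} Z = √μ Z ρ^{1/2}` (read off entrywise in an eigenbasis of `ρ`). As such
eigenvectors span, `E(ρ^{1/2} Z ρ^{1/2}) = ρ^{1/2} F(Z) ρ^{1/2}`, the symmetric self-adjointness.
-/

namespace Matrix

open scoped MatrixOrder in
lemma PosDef.trace_mul_mul_conjTranspose_eq_zero_iff {n : Type*} [Fintype n] [DecidableEq n]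
    {ρ : Matrix n n ℂ} (hρ : ρ.PosDef) (C : Matrix n n ℂ) : (C * ρ * Cᴴ).trace = 0 ↔ C = 0 := by
  refine ⟨fun h => ?_, by rintro rfl; simp⟩
  have hs : CFC.sqrt ρ * CFC.sqrt ρ = ρ := CFC.sqrt_mul_sqrt_self ρ hρ.posSemidef.nonneg
  have hsH : (CFC.sqrt ρ)ᴴ = CFC.sqrt ρ := (CFC.sqrt_nonneg ρ).posSemidef.1
  have hCs : C * CFC.sqrt ρ = 0 := by
    rw [← trace_mul_conjTranspose_self_eq_zero_iff, conjTranspose_mul, hsH, ← mul_assoc,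
      mul_assoc C, hs, h]
  rw [← hρ.isUnit.mul_left_eq_zero, ← hs, ← mul_assoc, hCs, zero_mul]

section Kraus

variable {n ι : Type*} [Fintype n] [Fintype ι] (M : ι → Matrix n n ℂ)

noncomputable def krausMap : Matrix n n ℂ →ₗ[ℂ] Matrix n n ℂ where
  toFun X := ∑ k, M k * X * (M k)ᴴ
  map_add' X Y := by simp only [mul_add, add_mul, Finset.sum_add_distrib]
  map_smul' c X := by simp [Finset.smul_sum]

lemma krausMap_apply (X : Matrix n n ℂ) : krausMap M X = ∑ k, M k * X * (M k)ᴴ := rfl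

lemma trace_krausMap_mul (X Y : Matrix n n ℂ) :
    (krausMap M X * Y).trace = (X * krausMap (fun k => (M k)ᴴ) Y).trace := by
  simp only [krausMap_apply, conjTranspose_conjTranspose, Finset.sum_mul, Finset.mul_sum,
    trace_sum]
  refine Finset.sum_congr rfl fun k _ => ?_
  simp only [mul_assoc]
  rw [trace_mul_comm (M k)]
  simp only [mul_assoc]

lemma krausMap_conjTranspose (X : Matrix n n ℂ) : (krausMap M X)ᴴ = krausMap M Xᴴ := by
  simp [krausMap_apply, conjTranspose_sum, mul_assoc]

variable {M}

lemma krausMap_adjoint_idem (h : ∀ X, krausMap M (krausMap M X) = krausMap M X)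
    (Z : Matrix n n ℂ) :
    krausMap (fun k => (M k)ᴴ) (krausMap (fun k => (M k)ᴴ) Z) = krausMap (fun k => (M k)ᴴ) Z := by
  refine ext_iff_trace_mul_left.2 fun V => ?_
  rw [← trace_krausMap_mul, ← trace_krausMap_mul, ← trace_krausMap_mul, h]

lemma sum_commutator_conjTranspose_mul_self [DecidableEq n] (hunit : ∑ k, (M k)ᴴ * M k = 1)
    (A : Matrix n n ℂ) :
    ∑ k, (M k * A - A * M k)ᴴ * (M k * A - A * M k) =
      krausMap (fun k => (M k)ᴴ) (Aᴴ * A) - Aᴴ * krausMap (fun k => (M k)ᴴ) A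
        - krausMap (fun k => (M k)ᴴ) Aᴴ * A + Aᴴ * A := by
  calc _ = ∑ k, ((M k)ᴴ * (Aᴴ * A) * M k - Aᴴ * ((M k)ᴴ * A * M k)
        - (M k)ᴴ * Aᴴ * M k * A + Aᴴ * ((M k)ᴴ * M k) * A) := by
        refine Finset.sum_congr rfl fun k _ => ?_
        simp only [conjTranspose_sub, conjTranspose_mul, sub_mul, mul_sub, mul_assoc]
        abel
    _ = _ := by
        simp only [Finset.sum_add_distrib, Finset.sum_sub_distrib, ← Finset.mul_sum,
          ← Finset.sum_mul, hunit, krausMap_apply, conjTranspose_conjTranspose, mul_one]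

lemma commute_of_krausMap_adjoint_fixed [DecidableEq n] (hunit : ∑ k, (M k)ᴴ * M k = 1)
    {ρ : Matrix n n ℂ} (hρ : ρ.PosDef) (hfix : krausMap M ρ = ρ) {A : Matrix n n ℂ}
    (hA : krausMap (fun k => (M k)ᴴ) A = A) (k : ι) : Commute (M k) A := by
  have hA' : krausMap (fun k => (M k)ᴴ) Aᴴ = Aᴴ := by rw [← krausMap_conjTranspose, hA]
  set C := fun k => M k * A - A * M k
  have hsum : ∑ k, (C k * ρ * (C k)ᴴ).trace = 0 := by
    calc ∑ k, (C k * ρ * (C k)ᴴ).trace = (ρ * ∑ k, (C k)ᴴ * C k).trace := by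
          simp only [Finset.mul_sum, trace_sum, trace_mul_cycle _ ρ, trace_mul_comm _ ρ]
      _ = (krausMap M ρ * (Aᴴ * A)).trace - (ρ * (Aᴴ * A)).trace := by
          rw [sum_commutator_conjTranspose_mul_self hunit, hA, hA', trace_krausMap_mul,
            ← trace_sub, ← mul_sub]
          congr 2
          abel
      _ = 0 := by rw [hfix, sub_self]
  have hk := (Finset.sum_eq_zero_iff_of_nonneg fun k _ =>
    (hρ.posSemidef.mul_mul_conjTranspose_same (C k)).trace_nonneg).1 hsum k (Finset.mem_univ k)
  exact sub_eq_zero.1 ((hρ.trace_mul_mul_conjTranspose_eq_zero_iff _).1 hk)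

lemma krausMap_mul_right_of_commute {A : Matrix n n ℂ} (h : ∀ k, Commute (M k)ᴴ A)
    (X : Matrix n n ℂ) : krausMap M (X * A) = krausMap M X * A := by
  simp only [krausMap_apply, Finset.sum_mul, mul_assoc, (h _).eq]

lemma krausMap_mul_left_of_commute {A : Matrix n n ℂ} (h : ∀ k, Commute (M k) A)
    (X : Matrix n n ℂ) : krausMap M (A * X) = A * krausMap M X := by
  simp only [krausMap_apply, Finset.mul_sum, ← mul_assoc, (h _).eq]

lemma trace_krausMap_mul_inv_mul_mul_inv [DecidableEq n] {σ τ : Matrix n n ℂ}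
    (hσ : IsUnit σ.det) (hτ : IsUnit τ.det)
    (h : ∀ Z, krausMap M (σ * Z * τ) = σ * krausMap (fun k => (M k)ᴴ) Z * τ)
    (X Y : Matrix n n ℂ) :
    (krausMap M X * σ⁻¹ * Y * τ⁻¹).trace = (X * σ⁻¹ * krausMap M Y * τ⁻¹).trace := by
  have hY : krausMap M Y = σ * krausMap (fun k => (M k)ᴴ) (σ⁻¹ * Y * τ⁻¹) * τ := by
    rw [← h, mul_assoc σ⁻¹, mul_nonsing_inv_cancel_left _ _ hσ, nonsing_inv_mul_cancel_right _ _ hτ]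
  calc (krausMap M X * σ⁻¹ * Y * τ⁻¹).trace = (krausMap M X * (σ⁻¹ * Y * τ⁻¹)).trace := by
        simp only [mul_assoc]
    _ = (X * krausMap (fun k => (M k)ᴴ) (σ⁻¹ * Y * τ⁻¹)).trace := trace_krausMap_mul M _ _
    _ = (X * σ⁻¹ * krausMap M Y * τ⁻¹).trace := by
        simp only [hY, mul_assoc, nonsing_inv_mul_cancel_left _ _ hσ, mul_nonsing_inv _ hτ, mul_one]

section InvariantState

variable [DecidableEq n] (hunit : ∑ k, (M k)ᴴ * M k = 1)
  (hidem : ∀ X, krausMap M (krausMap M X) = krausMap M X)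
  {ρ : Matrix n n ℂ} (hρ : ρ.PosDef) (hfix : krausMap M ρ = ρ)
include hunit hidem hρ hfix

lemma krausMap_mul_eq_mul_krausMap_adjoint (Z : Matrix n n ℂ) :
    krausMap M (ρ * Z) = ρ * krausMap (fun k => (M k)ᴴ) Z := by
  set F := krausMap (fun k => (M k)ᴴ)
  have hFidem : ∀ V, F (F V) = F V := krausMap_adjoint_idem hidem
  have hcomm : ∀ V k, Commute (M k) (F V) := fun V =>
    commute_of_krausMap_adjoint_fixed hunit hρ hfix (hFidem V)
  have hcommH : ∀ V k, Commute (M k)ᴴ (F V) := fun V k => by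
    have hfixH : F (F V)ᴴ = (F V)ᴴ := by rw [← krausMap_conjTranspose, hFidem]
    have h := (commute_of_krausMap_adjoint_fixed hunit hρ hfix hfixH k).star_star
    rwa [star_eq_conjTranspose, star_eq_conjTranspose, conjTranspose_conjTranspose] at h
  have hW : krausMap M (ρ * (Z - F Z)) = 0 := by
    refine ext_iff_trace_mul_right.2 fun V => ?_
    rw [zero_mul, trace_zero]
    calc (krausMap M (ρ * (Z - F Z)) * V).trace = ((Z - F Z) * (F V * ρ)).trace := by
          rw [trace_krausMap_mul, mul_assoc, trace_mul_comm ρ, mul_assoc]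
      _ = (krausMap M (F V * ρ) * (Z - F Z)).trace := by
          rw [krausMap_mul_left_of_commute (hcomm V), hfix, trace_mul_comm]
      _ = 0 := by rw [trace_krausMap_mul, map_sub, hFidem, sub_self, mul_zero, trace_zero]
  calc krausMap M (ρ * Z) = krausMap M (ρ * F Z) + krausMap M (ρ * (Z - F Z)) := by
        rw [← map_add, ← mul_add, add_sub_cancel]
    _ = ρ * F Z := by rw [hW, add_zero, krausMap_mul_right_of_commute (hcommH Z), hfix]

lemma krausMap_mul_eq_krausMap_adjoint_mul (Z : Matrix n n ℂ) :
    krausMap M (Z * ρ) = krausMap (fun k => (M k)ᴴ) Z * ρ := by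
  simpa [krausMap_conjTranspose, hρ.1.eq] using
    congrArg conjTranspose (krausMap_mul_eq_mul_krausMap_adjoint hunit hidem hρ hfix Zᴴ)

end InvariantState

end Kraus

section Diagonal

variable {n R : Type*} [Fintype n] [DecidableEq n] [CommRing R]

lemma diagonal_mul_single (a : n → R) (i j : n) (c : R) :
    diagonal a * single i j c = a i • single i j c := by
  ext k l
  by_cases hk : i = k <;> simp [diagonal_mul, single_apply, hk]

lemma single_mul_diagonal (a : n → R) (i j : n) (c : R) :
    single i j c * diagonal a = a j • single i j c := by
  ext k l
  by_cases hl : j = l <;> simp [mul_diagonal, single_apply, hl, mul_comm]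

variable [NoZeroDivisors R] {a b : n → R} {μ ν : R}

lemma diagonal_mul_eq_smul_mul_diagonal_of_imp (hab : ∀ i j, a i = μ * a j → b i = ν * b j)
    {Z : Matrix n n R} (h : diagonal a * Z = μ • (Z * diagonal a)) :
    diagonal b * Z = ν • (Z * diagonal b) := by
  ext i j
  have hij := congr_fun (congr_fun h i) j
  simp only [diagonal_mul, mul_diagonal, smul_apply, smul_eq_mul] at hij ⊢
  by_cases hZ : Z i j = 0
  · simp [hZ]
  · rw [hab i j (mul_right_cancel₀ hZ (by linear_combination hij))]
    ring

lemma _root_.AlgEquiv.map_diagonal_mul_eq_smul_of_imp (Φ : Matrix n n R ≃ₐ[R] Matrix n n R)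
    (hab : ∀ i j, a i = μ * a j → b i = ν * b j) {Z : Matrix n n R}
    (h : Φ (diagonal a) * Z = μ • (Z * Φ (diagonal a))) :
    Φ (diagonal b) * Z = ν • (Z * Φ (diagonal b)) := by
  obtain ⟨Z, rfl⟩ := Φ.surjective Z
  rw [← map_mul, ← map_mul, ← map_smul] at h ⊢
  exact congrArg Φ (diagonal_mul_eq_smul_mul_diagonal_of_imp hab (Φ.injective h))

end Diagonal

noncomputable abbrev IsHermitian.eigenvectorConj {n : Type*} [Fintype n] [DecidableEq n]
    {A : Matrix n n ℂ} (hA : A.IsHermitian) : Matrix n n ℂ ≃ₐ[ℂ] Matrix n n ℂ :=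
  (Unitary.conjStarAlgAut ℂ _ hA.eigenvectorUnitary).toAlgEquiv

lemma IsHermitian.eigenvectorConj_diagonal_eigenvalues {n : Type*} [Fintype n] [DecidableEq n]
    {A : Matrix n n ℂ} (hA : A.IsHermitian) :
    hA.eigenvectorConj (diagonal (RCLike.ofReal ∘ hA.eigenvalues)) = A :=
  hA.spectral_theorem.symm

end Matrix

section Sqrt

variable {d : ℕ} {ρ : Matrix (Fin d) (Fin d) ℂ}

lemma posSemidefSqrtOld_eq (hρ : ρ.PosSemidef) :
    posSemidefSqrtOld hρ = hρ.1.eigenvectorConj (diagonal fun i => (√(hρ.1.eigenvalues i) : ℂ)) :=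
  rfl

lemma posSemidefSqrtOld_mul_self (hρ : ρ.PosSemidef) :
    posSemidefSqrtOld hρ * posSemidefSqrtOld hρ = ρ := by
  conv_rhs => rw [← hρ.1.eigenvectorConj_diagonal_eigenvalues]
  rw [posSemidefSqrtOld_eq, ← map_mul, diagonal_mul_diagonal]
  congr 2
  funext i
  simp [← Complex.ofReal_mul, Real.mul_self_sqrt (hρ.eigenvalues_nonneg i)]

lemma isUnit_det_posSemidefSqrtOld (hρ : ρ.PosDef) :
    IsUnit (posSemidefSqrtOld hρ.posSemidef).det :=
  isUnit_of_mul_isUnit_left (by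
    rw [← det_mul, posSemidefSqrtOld_mul_self]
    exact (isUnit_iff_isUnit_det ρ).1 hρ.isUnit)

lemma posSemidefSqrtOld_mul_eq_smul (hρ : ρ.PosSemidef) {μ : ℂ} {Z : Matrix (Fin d) (Fin d) ℂ}
    (h : ρ * Z = μ • (Z * ρ)) :
    posSemidefSqrtOld hρ * Z = (√μ.re : ℂ) • (Z * posSemidefSqrtOld hρ) := by
  rw [← hρ.1.eigenvectorConj_diagonal_eigenvalues] at h
  rw [posSemidefSqrtOld_eq]
  refine AlgEquiv.map_diagonal_mul_eq_smul_of_imp _ (fun i j hij => ?_) h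
  have hre : hρ.1.eigenvalues i = μ.re * hρ.1.eigenvalues j := by
    simpa using congrArg Complex.re hij
  rw [hre, Real.sqrt_mul' _ (hρ.eigenvalues_nonneg j), Complex.ofReal_mul]

lemma map_posSemidefSqrtOld_mul_mul (hρ : ρ.PosDef)
    {T S : Matrix (Fin d) (Fin d) ℂ →ₗ[ℂ] Matrix (Fin d) (Fin d) ℂ}
    (hl : ∀ Z, T (ρ * Z) = ρ * S Z) (hr : ∀ Z, T (Z * ρ) = S Z * ρ)
    (Z : Matrix (Fin d) (Fin d) ℂ) :
    T (posSemidefSqrtOld hρ.posSemidef * Z * posSemidefSqrtOld hρ.posSemidef) =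
      posSemidefSqrtOld hρ.posSemidef * S Z * posSemidefSqrtOld hρ.posSemidef := by
  set q := posSemidefSqrtOld hρ.posSemidef
  have hq : q * q = ρ := posSemidefSqrtOld_mul_self hρ.posSemidef
  have heigen : ∀ (μ : ℂ) Z, ρ * Z = μ • (Z * ρ) → T (q * Z * q) = q * S Z * q := by
    intro μ Z h
    have hS : ρ * S Z = μ • (S Z * ρ) := by rw [← hl, h, map_smul, hr]
    rw [posSemidefSqrtOld_mul_eq_smul _ h, posSemidefSqrtOld_mul_eq_smul _ hS, smul_mul, smul_mul,
      mul_assoc, mul_assoc, hq, map_smul, hr]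
  set Φ := hρ.1.eigenvectorConj
  set lam := hρ.1.eigenvalues
  have hbasis : ∀ i j,
      ρ * Φ (single i j 1) = ((lam i / lam j : ℝ) : ℂ) • (Φ (single i j 1) * ρ) := by
    intro i j
    rw [← hρ.1.eigenvectorConj_diagonal_eigenvalues, ← map_mul, ← map_mul, ← map_smul,
      diagonal_mul_single, single_mul_diagonal, smul_smul]
    congr 2
    have := (hρ.eigenvalues_pos j).ne'
    simp [field]
  have key : T ∘ₗ (LinearMap.mulLeft ℂ q ∘ₗ LinearMap.mulRight ℂ q) =
      (LinearMap.mulLeft ℂ q ∘ₗ LinearMap.mulRight ℂ q) ∘ₗ S :=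
    ((stdBasis ℂ (Fin d) (Fin d)).map Φ.toLinearEquiv).ext fun ⟨i, j⟩ => by
      rw [Module.Basis.map_apply, stdBasis_eq_single]
      simp only [LinearMap.comp_apply, LinearMap.mulLeft_apply, LinearMap.mulRight_apply,
        AlgEquiv.toLinearEquiv_apply, ← mul_assoc]
      exact heigen _ _ (hbasis i j)
  simpa only [LinearMap.comp_apply, LinearMap.mulLeft_apply, LinearMap.mulRight_apply,
    ← mul_assoc] using LinearMap.congr_fun key Z

end Sqrt

theorem cptp_projection_selfadjoint_weighted_general {d : ℕ}
    (E : Matrix (Fin d) (Fin d) ℂ → Matrix (Fin d) (Fin d) ℂ)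
    (hE : IsCPTP E) (hproj : ∀ X, E (E X) = E X)
    (ρ : Matrix (Fin d) (Fin d) ℂ) (hρ : ρ.PosDef)
    (hfix : E ρ = ρ) :
    (∀ X Y, (E X * ρ⁻¹ * Y).trace = (X * ρ⁻¹ * E Y).trace) ∧
    (∀ X Y, (E X * (posSemidefSqrtOld hρ.posSemidef)⁻¹ * Y * (posSemidefSqrtOld hρ.posSemidef)⁻¹).trace
          = (X * (posSemidefSqrtOld hρ.posSemidef)⁻¹ * E Y * (posSemidefSqrtOld hρ.posSemidef)⁻¹).trace) ∧
    (∀ X Y, E Y = Y →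
      ((X - E X) * ρ⁻¹ * Y).trace = 0 ∧
      ((X - E X) * (posSemidefSqrtOld hρ.posSemidef)⁻¹ * Y * (posSemidefSqrtOld hρ.posSemidef)⁻¹).trace = 0) := by
  obtain ⟨m, M, hEM, hunit⟩ := hE
  obtain rfl : E = krausMap M := funext hEM
  have hl := krausMap_mul_eq_mul_krausMap_adjoint hunit hproj hρ hfix
  have hr := krausMap_mul_eq_krausMap_adjoint_mul hunit hproj hρ hfix
  have hq := isUnit_det_posSemidefSqrtOld hρ
  have h₁ : ∀ X Y, (krausMap M X * ρ⁻¹ * Y).trace = (X * ρ⁻¹ * krausMap M Y).trace := by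
    simpa using trace_krausMap_mul_inv_mul_mul_inv (τ := 1)
      ((isUnit_iff_isUnit_det ρ).1 hρ.isUnit) (by simp) (by simpa using hl)
  have h₂ := trace_krausMap_mul_inv_mul_mul_inv hq hq (map_posSemidefSqrtOld_mul_mul hρ hl hr)
  refine ⟨h₁, h₂, fun X Y hY => ⟨?_, ?_⟩⟩
  · rw [sub_mul, sub_mul, trace_sub, h₁, hY, sub_self]
  · rw [sub_mul, sub_mul, sub_mul, trace_sub, h₂, hY, sub_self]

/-- A CPTP projection `E` with a positive-definite fixed density matrix `ρ` is
self-adjoint with respect to the `ρ⁻¹`-weighted inner products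
`⟨X,Y⟩ = Tr(X ρ⁻¹ Y)` and `⟨X,Y⟩ₛ = Tr(X ρ^{-1/2} Y ρ^{-1/2})`; consequently `E` is the
orthogonal projection onto `fix(E)` with respect to each of these inner products
(`X - E X` is orthogonal to every fixed point). -/
theorem cptp_projection_selfadjoint_weighted {d : ℕ}
    (E : Matrix (Fin d) (Fin d) ℂ → Matrix (Fin d) (Fin d) ℂ)
    (hE : IsCPTP E) (hproj : ∀ X, E (E X) = E X)
    (ρ : Matrix (Fin d) (Fin d) ℂ) (hρ : ρ.PosDef) (hρtr : ρ.trace = 1)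
    (hfix : E ρ = ρ) :
    (∀ X Y, (E X * ρ⁻¹ * Y).trace = (X * ρ⁻¹ * E Y).trace) ∧
    (∀ X Y, (E X * (posSemidefSqrtOld hρ.posSemidef)⁻¹ * Y * (posSemidefSqrtOld hρ.posSemidef)⁻¹).trace
          = (X * (posSemidefSqrtOld hρ.posSemidef)⁻¹ * E Y * (posSemidefSqrtOld hρ.posSemidef)⁻¹).trace) ∧
    (∀ X Y, E Y = Y →
      ((X - E X) * ρ⁻¹ * Y).trace = 0 ∧
      ((X - E X) * (posSemidefSqrtOld hρ.posSemidef)⁻¹ * Y * (posSemidefSqrtOld hρ.posSemidef)⁻¹).trace = 0) :=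
  cptp_projection_selfadjoint_weighted_general E hE hproj ρ hρ hfix
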